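/- arXiv:1612.05080 — 3 statements merged into one kernel-verified Lean document; each statement's English description precedes it below -/
import Mathlib

section
/- For g = [[A, B],[C, D]] ∈ SU(p,q) and Λ a p×q complex matrix with Λ Λᴴ < 1_p (spectral norm less than 1), the matrix Bᵀ Λ + Dᵀ is invertible, and the Möbius-type action Λ ↦ (Aᵀ Λ + Cᵀ)(Bᵀ Λ + Dᵀ)⁻¹ maps the set D_{p,q} = {Λ : 1_p − Λ Λᴴ > 0} to itself. -/
/-!
Transposing `g J gᴴ = J`, with `J = diag(1, -1)`, shows that `gᵀ = [[Aᵀ, Cᵀ], [Bᵀ, Dᵀ]]` also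
preserves the form: `(gᵀ)ᴴ J gᵀ = J`. Evaluating this on the frame `[Λ; 1]` gives, for
`X = Aᵀ Λ + Cᵀ` and `Y = Bᵀ Λ + Dᵀ`, the identity `Yᴴ Y - Xᴴ X = 1 - Λᴴ Λ`, which is positive
definite because `1 - Λ Λᴴ` is. Hence `Y` is invertible and
`1 - (X Y⁻¹)ᴴ (X Y⁻¹) = Y⁻ᴴ (1 - Λᴴ Λ) Y⁻¹` is positive definite, and so is `1 - (X Y⁻¹) (X Y⁻¹)ᴴ`.
-/

open Matrix
open scoped ComplexOrder

namespace Matrix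

variable {m n α : Type*} [Fintype m] [Fintype n]

section Indefinite

variable [CommRing α] [StarRing α]

theorem conjTranspose_transpose_mul_mul_transpose {J g : Matrix m m α} (hJ : Jᵀ = J)
    (hg : g * J * gᴴ = J) : (gᵀ)ᴴ * J * gᵀ = J := by
  have h := congrArg transpose hg
  rwa [transpose_mul, transpose_mul, hJ, ← mul_assoc,
    ← conjTranspose_transpose_eq_transpose_conjTranspose] at h

variable [DecidableEq m] [DecidableEq n]

local notation "J" => (fromBlocks 1 0 0 (-1) : Matrix (m ⊕ n) (m ⊕ n) α)

theorem conjTranspose_fromRows_mul_fromBlocks_mul_fromRows {k : Type*} (X : Matrix m k α)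
    (Y : Matrix n k α) : (fromRows X Y)ᴴ * J * fromRows X Y = Xᴴ * X - Yᴴ * Y := by
  rw [conjTranspose_fromRows_eq_fromCols_conjTranspose, fromCols_mul_fromBlocks,
    fromCols_mul_fromRows]
  simp [sub_eq_add_neg]

theorem conjTranspose_mul_self_sub_eq_of_fromBlocks
    {A : Matrix m m α} {B : Matrix m n α} {C : Matrix n m α} {D : Matrix n n α}
    (h : (fromBlocks A B C D)ᴴ * J * fromBlocks A B C D = J) (Λ : Matrix m n α) :
    (A * Λ + B)ᴴ * (A * Λ + B) - (C * Λ + D)ᴴ * (C * Λ + D) = Λᴴ * Λ - 1 := by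
  set W : Matrix (m ⊕ n) n α := fromRows Λ 1
  have hW : fromBlocks A B C D * W = fromRows (A * Λ + B) (C * Λ + D) := by
    rw [fromBlocks_mul_fromRows, Matrix.mul_one, Matrix.mul_one]
  calc _ = (fromBlocks A B C D * W)ᴴ * J * (fromBlocks A B C D * W) := by
        rw [hW, conjTranspose_fromRows_mul_fromBlocks_mul_fromRows]
    _ = Wᴴ * ((fromBlocks A B C D)ᴴ * J * fromBlocks A B C D) * W := by
        simp only [conjTranspose_mul, Matrix.mul_assoc]
    _ = Λᴴ * Λ - 1 := by
        rw [h, conjTranspose_fromRows_mul_fromBlocks_mul_fromRows, conjTranspose_one, one_mul]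

end Indefinite

section RCLike

variable {𝕜 : Type*} [RCLike 𝕜] [DecidableEq n]

theorem isUnit_of_posDef_conjTranspose_mul_self_sub {X : Matrix m n 𝕜} {Y : Matrix n n 𝕜}
    (h : (Yᴴ * Y - Xᴴ * X).PosDef) : IsUnit Y := by
  have hYY : (Yᴴ * Y).PosDef := by
    simpa using PosDef.posSemidef_add (posSemidef_conjTranspose_mul_self X) h
  have hdet := hYY.isUnit
  rw [isUnit_iff_isUnit_det, det_mul] at hdet
  exact (isUnit_iff_isUnit_det _).mpr (isUnit_of_mul_isUnit_right hdet)

theorem posDef_one_sub_conjTranspose_mul_self_mul_inv {X : Matrix m n 𝕜} {Y : Matrix n n 𝕜}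
    (h : (Yᴴ * Y - Xᴴ * X).PosDef) : (1 - (X * Y⁻¹)ᴴ * (X * Y⁻¹)).PosDef := by
  have hY := isUnit_of_posDef_conjTranspose_mul_self_sub h
  have hYY : Y * Y⁻¹ = 1 := mul_nonsing_inv _ ((isUnit_iff_isUnit_det _).mp hY)
  have hconj : 1 - (X * Y⁻¹)ᴴ * (X * Y⁻¹) = star Y⁻¹ * (Yᴴ * Y - Xᴴ * X) * Y⁻¹ := by
    rw [star_eq_conjTranspose, Matrix.mul_sub, Matrix.sub_mul, ← Matrix.mul_assoc _ Yᴴ,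
      ← conjTranspose_mul, Matrix.mul_assoc, hYY, conjTranspose_one, Matrix.one_mul,
      conjTranspose_mul X]
    simp only [Matrix.mul_assoc]
  rw [hconj]
  exact (IsUnit.posDef_star_left_conjugate_iff (isUnit_nonsing_inv_iff.mpr hY)).mpr h

variable [DecidableEq m]

theorem PosDef.one_sub_conjTranspose_mul_self {M : Matrix m n 𝕜} (h : (1 - M * Mᴴ).PosDef) :
    (1 - Mᴴ * M).PosDef := by
  set G := (1 - M * Mᴴ)⁻¹
  have hG : G * (1 - M * Mᴴ) = 1 := nonsing_inv_mul _ ((isUnit_iff_isUnit_det _).mp h.isUnit)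
  have push : (1 - M * Mᴴ) * M = M * (1 - Mᴴ * M) := by
    simp only [Matrix.sub_mul, Matrix.mul_sub, Matrix.one_mul, Matrix.mul_one, Matrix.mul_assoc]
  -- the push-through identity makes `1 + Mᴴ (1 - M Mᴴ)⁻¹ M` an explicit inverse
  have hinv : (1 + Mᴴ * G * M) * (1 - Mᴴ * M) = 1 := by
    rw [Matrix.add_mul, Matrix.one_mul, Matrix.mul_assoc, Matrix.mul_assoc, ← push,
      ← Matrix.mul_assoc G, hG, Matrix.one_mul, sub_add_cancel]
  rw [← posDef_inv_iff, inv_eq_left_inv hinv]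
  exact PosDef.one.add_posSemidef (h.inv.posSemidef.conjTranspose_mul_mul_same M)

theorem posDef_one_sub_conjTranspose_mul_self_iff (M : Matrix m n 𝕜) :
    (1 - Mᴴ * M).PosDef ↔ (1 - M * Mᴴ).PosDef :=
  ⟨fun h => by
    simpa only [conjTranspose_conjTranspose] using
      PosDef.one_sub_conjTranspose_mul_self (M := Mᴴ) (by rwa [conjTranspose_conjTranspose]),
    PosDef.one_sub_conjTranspose_mul_self⟩

end RCLike

end Matrix

theorem SU_pq_moebius_maps_D_to_D_general (p q : ℕ)
    (g : Matrix (Fin p ⊕ Fin q) (Fin p ⊕ Fin q) ℂ)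
    (hg : g * Matrix.fromBlocks 1 0 0 (-1) * gᴴ = Matrix.fromBlocks 1 0 0 (-1))
    (Λ : Matrix (Fin p) (Fin q) ℂ)
    (hΛ : (1 - Λ * Λᴴ).PosDef) :
    IsUnit ((g.toBlocks₁₂)ᵀ * Λ + (g.toBlocks₂₂)ᵀ) ∧
    (1 - ((g.toBlocks₁₁)ᵀ * Λ + (g.toBlocks₂₁)ᵀ) * ((g.toBlocks₁₂)ᵀ * Λ + (g.toBlocks₂₂)ᵀ)⁻¹ *
      (((g.toBlocks₁₁)ᵀ * Λ + (g.toBlocks₂₁)ᵀ) * ((g.toBlocks₁₂)ᵀ * Λ + (g.toBlocks₂₂)ᵀ)⁻¹)ᴴ).PosDef := by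
  set X := (g.toBlocks₁₁)ᵀ * Λ + (g.toBlocks₂₁)ᵀ
  set Y := (g.toBlocks₁₂)ᵀ * Λ + (g.toBlocks₂₂)ᵀ
  have hgt := conjTranspose_transpose_mul_mul_transpose (by simp [fromBlocks_transpose]) hg
  rw [← fromBlocks_toBlocks g, fromBlocks_transpose] at hgt
  have hK : (Yᴴ * Y - Xᴴ * X).PosDef := by
    rw [← neg_sub, conjTranspose_mul_self_sub_eq_of_fromBlocks hgt Λ, neg_sub]
    exact (posDef_one_sub_conjTranspose_mul_self_iff Λ).mpr hΛ
  exact ⟨isUnit_of_posDef_conjTranspose_mul_self_sub hK,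
    (posDef_one_sub_conjTranspose_mul_self_iff _).mp
      (posDef_one_sub_conjTranspose_mul_self_mul_inv hK)⟩

theorem SU_pq_moebius_maps_D_to_D (p q : ℕ) (hp : 1 ≤ p) (hq : 1 ≤ q)
    (g : Matrix (Fin p ⊕ Fin q) (Fin p ⊕ Fin q) ℂ)
    (hg : g * Matrix.fromBlocks 1 0 0 (-1) * gᴴ = Matrix.fromBlocks 1 0 0 (-1))
    (hdet : g.det = 1)
    (Λ : Matrix (Fin p) (Fin q) ℂ)
    (hΛ : (1 - Λ * Λᴴ).PosDef) :
    IsUnit ((g.toBlocks₁₂)ᵀ * Λ + (g.toBlocks₂₂)ᵀ) ∧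
    (1 - ((g.toBlocks₁₁)ᵀ * Λ + (g.toBlocks₂₁)ᵀ) * ((g.toBlocks₁₂)ᵀ * Λ + (g.toBlocks₂₂)ᵀ)⁻¹ *
      (((g.toBlocks₁₁)ᵀ * Λ + (g.toBlocks₂₁)ᵀ) * ((g.toBlocks₁₂)ᵀ * Λ + (g.toBlocks₂₂)ᵀ)⁻¹)ᴴ).PosDef :=
  SU_pq_moebius_maps_D_to_D_general p q g hg Λ hΛ
end

section
/- Let p, q, n be positive integers with n ≥ min(p,q). For a p×q table M of nonnegative integers, define the monomial Z^M = ∏_{i,j} Z_{i,j}^{M_{i,j}} where Z_{i,j} = ∑_{k=1}^n z_{k,i} z'_{k,j} are polynomials in the n(p+q) variables z_{k,i}, z'_{k,j}. Then the polynomials {Z^M : M ∈ ℕ^{p×q}} are linearly independent over ℂ. -/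
open MvPolynomial

/-- The invariant quadratic polynomial `Z_{i,j} = ∑_k z_{k,i} z'_{k,j}`, as an element of the
polynomial ring in the `n(p+q)` variables `z_{k,i}` (index `Sum.inl (k,i)`) and `z'_{k,j}`
(index `Sum.inr (k,j)`). -/
noncomputable def Zvar (n p q : ℕ) (i : Fin p) (j : Fin q) :
    MvPolynomial (Fin n × Fin p ⊕ Fin n × Fin q) ℂ :=
  ∑ k : Fin n, X (Sum.inl (k, i)) * X (Sum.inr (k, j))

lemma prod_univ_X_pow {σ : Type*} [Fintype σ] [DecidableEq σ] (f : σ → ℕ) :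
    (∏ x : σ, (X x : MvPolynomial σ ℂ) ^ f x)
      = monomial (Finsupp.equivFunOnFinite.symm f) (1 : ℂ) := by
  calc ∏ x : σ, (X x : MvPolynomial σ ℂ) ^ f x
      = ∏ x : σ, (X x : MvPolynomial σ ℂ) ^ (Finsupp.equivFunOnFinite.symm f) x := by simp
    _ = ∏ x ∈ (Finsupp.equivFunOnFinite.symm f).support,
          (X x : MvPolynomial σ ℂ) ^ (Finsupp.equivFunOnFinite.symm f) x := by
        refine (Finset.prod_subset (Finset.subset_univ _) ?_).symm
        intro x _ hx
        simp only [Finsupp.mem_support_iff, ne_eq, not_not] at hx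
        simp [hx]
    _ = monomial (Finsupp.equivFunOnFinite.symm f) (1 : ℂ) := prod_X_pow_eq_monomial

lemma monomials_li (p q : ℕ) :
    LinearIndependent ℂ (fun M : Fin p → Fin q → ℕ =>
      ∏ i : Fin p, ∏ j : Fin q, (X (i, j) : MvPolynomial (Fin p × Fin q) ℂ) ^ (M i j)) := by
  have h : LinearIndependent ℂ
      (fun d : (Fin p × Fin q) →₀ ℕ => monomial d (1 : ℂ)) := by
    have := (basisMonomials (Fin p × Fin q) ℂ).linearIndependent
    rwa [coe_basisMonomials] at this
  have h2 := h.comp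
      (fun M : Fin p → Fin q → ℕ =>
        Finsupp.equivFunOnFinite.symm (fun x : Fin p × Fin q => M x.1 x.2))
      (by
        intro M N hMN
        have := Finsupp.equivFunOnFinite.symm.injective hMN
        funext i j
        exact congrFun this (i, j))
  convert h2 using 1
  funext M
  rw [← Finset.prod_product']
  exact prod_univ_X_pow _

lemma key (n p q : ℕ)
    (f : (Fin n × Fin p ⊕ Fin n × Fin q) → MvPolynomial (Fin p × Fin q) ℂ)
    (hf : ∀ i j, aeval f (Zvar n p q i j) = X (i, j)) :
    LinearIndependent ℂ (fun M : Fin p → Fin q → ℕ =>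
      ∏ i : Fin p, ∏ j : Fin q, (Zvar n p q i j) ^ (M i j)) := by
  apply LinearIndependent.of_comp (aeval f).toLinearMap
  have : (fun M : Fin p → Fin q → ℕ =>
      (aeval f).toLinearMap (∏ i : Fin p, ∏ j : Fin q, (Zvar n p q i j) ^ (M i j)))
      = fun M : Fin p → Fin q → ℕ =>
      ∏ i : Fin p, ∏ j : Fin q, (X (i, j) : MvPolynomial (Fin p × Fin q) ℂ) ^ (M i j) := by
    funext M
    simp only [AlgHom.toLinearMap_apply, map_prod, map_pow, hf]
  rw [Function.comp_def]
  rw [show (fun M : Fin p → Fin q → ℕ =>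
      (aeval f).toLinearMap (∏ i : Fin p, ∏ j : Fin q, (Zvar n p q i j) ^ (M i j))) = _ from this]
  exact monomials_li p q

theorem Z_monomials_linearly_independent (n p q : ℕ)
    (hp : 1 ≤ p) (hq : 1 ≤ q) (hn : min p q ≤ n) :
    LinearIndependent ℂ (fun M : Fin p → Fin q → ℕ =>
      ∏ i : Fin p, ∏ j : Fin q, (Zvar n p q i j) ^ (M i j)) := by
  rcases le_total p q with hpq | hpq
  · -- p ≤ q, so p ≤ n
    have hpn : p ≤ n := le_trans (by simp [min_eq_left hpq]) hn
    apply key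
    intro i j
    -- f (inl (k,i')) = if k.val = i'.val then 1 else 0 ; f (inr (k,j)) = X (⟨k⟩, j) if k < p
    case f => exact fun x => match x with
      | Sum.inl (k, i') => if k.val = i'.val then 1 else 0
      | Sum.inr (k, j') => if h : k.val < p then X (⟨k.val, h⟩, j') else 0
    simp only [Zvar, map_sum, map_mul, aeval_X]
    rw [Finset.sum_eq_single (⟨i.val, lt_of_lt_of_le i.isLt hpn⟩ : Fin n)]
    · simp
    · intro k _ hk
      have : ¬ (k.val = i.val) := fun h => hk (by ext; simp [h])
      simp [this]
    · simp
  · have hqn : q ≤ n := le_trans (by simp [min_eq_right hpq]) hn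
    apply key
    intro i j
    case f => exact fun x => match x with
      | Sum.inr (k, j') => if k.val = j'.val then 1 else 0
      | Sum.inl (k, i') => if h : k.val < q then X (i', ⟨k.val, h⟩) else 0
    simp only [Zvar, map_sum, map_mul, aeval_X]
    rw [Finset.sum_eq_single (⟨j.val, lt_of_lt_of_le j.isLt hqn⟩ : Fin n)]
    · simp
    · intro k _ hk
      have : ¬ (k.val = j.val) := fun h => hk (by ext; simp [h])
      simp [this]
    · simp
end

section
/- For n ≥ 1 and k ∈ ℕ, the coefficient of the monomial Z^k (where Z = z₁z'₁ + ⋯ + z_n z'_n) in the Segal–Bargmann inner product satisfies ⟨Z^k, Z^l⟩ = δ_{k,l} · k! · (n+k−1)!/(n−1)!, i.e. π^{-2n} ∫_{ℂ^{2n}} e^{−|z|²−|z'|²} conj(Z^k) Z^l dz dz' = δ_{k,l} k! (n+k−1)!/(n−1)!. Consequently the states ψ_{k,n} = [(n−1)!/((n+k−1)! k!)]^{1/2} Z^k form an orthonormal family. -/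
open MeasureTheory
open scoped Nat

/-- `Z = ∑ᵢ zᵢ z'ᵢ` evaluated at a point of `ℂⁿ × ℂⁿ`. -/
noncomputable def Zval {n : ℕ} (zz : (Fin n → ℂ) × (Fin n → ℂ)) : ℂ := ∑ i, zz.1 i * zz.2 i

/-- The normalized state `ψ_{k,n} = [(n−1)!/((n+k−1)! k!)]^{1/2} Z^k` evaluated at a point. -/
noncomputable def psiVal (n k : ℕ) (zz : (Fin n → ℂ) × (Fin n → ℂ)) : ℂ :=
  (Real.sqrt (((n - 1)! : ℝ) / (((n + k - 1)! : ℝ) * (k ! : ℝ))) : ℂ) * (Zval zz) ^ k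

/-! By the multinomial theorem, `conj (Z^k) Z^l e^{-|z|²-|z'|²}` is a combination of products of
the one-variable functions `w̄^a w^b e^{-|w|²}`, whose integrals over `ℂ` are `δ_{ab} π a!`: they
vanish off the diagonal because a rotation `w ↦ u w` multiplies them by `ū^a u^b`, and on the
diagonal they are radial Gamma integrals. Only the terms with equal multi-indices `α = β`, which
forces `k = l`, survive, and each contributes `π^{2n} (multinomial(α) ∏ αᵢ!)² = π^{2n} (k!)²`.
There are `(n+k-1).choose k` multi-indices of size `k`, which gives `k! (n+k-1)!/(n-1)!`. -/

open Finset Real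

theorem integrable_norm_pow_mul_exp_neg_sq {E : Type*} [NormedAddCommGroup E] [NormedSpace ℝ E]
    [FiniteDimensional ℝ E] [MeasurableSpace E] [BorelSpace E] [Nontrivial E] (μ : Measure E)
    [μ.IsAddHaarMeasure] (m : ℕ) :
    Integrable (fun x : E => ‖x‖ ^ m * exp (-‖x‖ ^ 2)) μ := by
  rw [integrable_fun_norm_addHaar μ (f := fun y => y ^ m * exp (-y ^ 2))]
  have h := integrableOn_rpow_mul_exp_neg_mul_sq one_pos
    (s := ((Module.finrank ℝ E - 1 + m : ℕ) : ℝ)) (neg_one_lt_zero.trans_le (Nat.cast_nonneg _))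
  refine h.congr_fun (fun y _ => ?_) measurableSet_Ioi
  simp only [rpow_natCast, smul_eq_mul, pow_add, neg_one_mul, mul_assoc]

theorem integral_Ioi_pow_mul_exp_neg_sq (a : ℕ) :
    ∫ y in Set.Ioi (0 : ℝ), y ^ (2 * a + 1) * exp (-y ^ 2) = a ! / 2 := by
  have h := integral_rpow_mul_exp_neg_rpow two_pos (q := ((2 * a + 1 : ℕ) : ℝ))
    (neg_one_lt_zero.trans_le (Nat.cast_nonneg _))
  rw [show ((2 * a + 1 : ℕ) + 1 : ℝ) / 2 = a + 1 by push_cast; ring, Gamma_nat_eq_factorial] at h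
  simp_rw [rpow_natCast, rpow_two] at h
  rw [h]; ring

theorem Complex.integral_norm_pow_two_mul_mul_exp_neg_sq (a : ℕ) :
    ∫ w : ℂ, ‖w‖ ^ (2 * a) * Real.exp (-‖w‖ ^ 2) = π * a ! := by
  rw [integral_fun_norm_addHaar volume (fun y => y ^ (2 * a) * Real.exp (-y ^ 2))]
  simp only [Complex.finrank_real_complex, Nat.add_one_sub_one, pow_one, smul_eq_mul, ← mul_assoc,
    ← pow_succ', integral_Ioi_pow_mul_exp_neg_sq, Measure.real, Complex.volume_ball]
  simp only [ENNReal.ofReal_one, one_pow, one_mul, ENNReal.coe_toReal, NNReal.coe_real_pi,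
    nsmul_eq_mul, Nat.cast_ofNat]
  ring

noncomputable def gaussMonomial (a b : ℕ) (w : ℂ) : ℂ :=
  (starRingEnd ℂ w) ^ a * w ^ b * exp (-‖w‖ ^ 2)

theorem norm_gaussMonomial (a b : ℕ) (w : ℂ) :
    ‖gaussMonomial a b w‖ = ‖w‖ ^ (a + b) * exp (-‖w‖ ^ 2) := by
  simp only [gaussMonomial, norm_mul, norm_pow, Complex.norm_conj, Complex.norm_real,
    norm_of_nonneg (exp_pos _).le, pow_add]

theorem integrable_gaussMonomial (a b : ℕ) : Integrable (gaussMonomial a b) := by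
  refine (integrable_norm_pow_mul_exp_neg_sq volume (a + b)).mono' ?_
    (.of_forall fun w => (norm_gaussMonomial a b w).le)
  unfold gaussMonomial
  fun_prop

theorem gaussMonomial_self (a : ℕ) (w : ℂ) :
    gaussMonomial a a w = ((‖w‖ ^ (2 * a) * exp (-‖w‖ ^ 2) : ℝ) : ℂ) := by
  rw [gaussMonomial, ← mul_pow, Complex.conj_mul', ← pow_mul]
  push_cast; ring

theorem gaussMonomial_circle_mul (a b : ℕ) (u : Circle) (w : ℂ) :
    gaussMonomial a b (u * w) = (starRingEnd ℂ u) ^ a * (u : ℂ) ^ b * gaussMonomial a b w := by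
  simp only [gaussMonomial, map_mul, norm_mul, Circle.norm_coe, one_mul]
  ring

theorem integral_gaussMonomial_of_ne {a b : ℕ} (hab : a ≠ b) : ∫ w, gaussMonomial a b w = 0 := by
  set u := Circle.exp (π / ((b : ℝ) - a))
  have hu : (starRingEnd ℂ u) ^ a * (u : ℂ) ^ b = -1 := by
    have hba : (b : ℂ) - a ≠ 0 := sub_ne_zero.2 (by exact_mod_cast hab.symm)
    simp only [u, Circle.coe_exp, ← Complex.exp_conj, ← Complex.exp_nat_mul, ← Complex.exp_add,
      ← Complex.exp_pi_mul_I, map_mul, Complex.conj_ofReal, Complex.conj_I]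
    congr 1
    push_cast
    field_simp
    ring
  have h := ((rotation u).measurePreserving).integral_comp
    (rotation u).toHomeomorph.measurableEmbedding (gaussMonomial a b)
  simp only [rotation_apply, gaussMonomial_circle_mul, integral_const_mul, hu] at h
  linear_combination -h / 2

theorem integral_gaussMonomial (a b : ℕ) :
    ∫ w, gaussMonomial a b w = if a = b then (π * a ! : ℂ) else 0 := by
  split_ifs with hab
  · subst hab
    rw [integral_congr_ae (.of_forall (gaussMonomial_self a)), integral_complex_ofReal,
      Complex.integral_norm_pow_two_mul_mul_exp_neg_sq]
    norm_cast
  · exact integral_gaussMonomial_of_ne hab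

theorem integrable_prod_gaussMonomial {ι : Type*} [Fintype ι] (α β : ι → ℕ) :
    Integrable fun z : ι → ℂ => ∏ i, gaussMonomial (α i) (β i) (z i) :=
  Integrable.fintype_prod fun i => integrable_gaussMonomial (α i) (β i)

theorem integral_prod_gaussMonomial {ι : Type*} [Fintype ι] (α β : ι → ℕ) :
    ∫ z : ι → ℂ, ∏ i, gaussMonomial (α i) (β i) (z i) =
      if α = β then (π : ℂ) ^ Fintype.card ι * ∏ i, ((α i)! : ℂ) else 0 := by
  simp_rw [volume_pi, integral_fintype_prod_eq_prod, integral_gaussMonomial, prod_ite_zero,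
    mem_univ, true_implies, ← funext_iff, prod_mul_distrib, prod_const, card_univ]

theorem multinomial_mul_prod_factorial {ι : Type*} {s : Finset ι} {k : ℕ} {α : ι → ℕ}
    [DecidableEq ι] (hα : α ∈ piAntidiag s k) :
    Nat.multinomial s α * ∏ i ∈ s, (α i)! = k ! := by
  rw [mul_comm, Nat.multinomial_spec, (mem_piAntidiag.1 hα).1]

theorem card_piAntidiag_univ {ι : Type*} [Fintype ι] [DecidableEq ι] (k : ℕ) :
    #(piAntidiag (univ : Finset ι) k) = (Fintype.card ι + k - 1).choose k := by
  rw [← map_sym_eq_piAntidiag, card_map, sym_univ, card_univ, Sym.card_sym_eq_choose]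

theorem sum_multinomial_mul_ite_sq {ι : Type*} [Fintype ι] [DecidableEq ι] (c : ℂ) (k l : ℕ) :
    ∑ α ∈ piAntidiag (univ : Finset ι) k, ∑ β ∈ piAntidiag univ l,
      (Nat.multinomial univ α * Nat.multinomial univ β : ℂ) *
        (if α = β then c * ∏ i, ((α i)! : ℂ) else 0) ^ 2 =
    if k = l then (Fintype.card ι + k - 1).choose k * (c * k !) ^ 2 else 0 := by
  have hdiag : ∀ α ∈ piAntidiag (univ : Finset ι) k, ∑ β ∈ piAntidiag univ l,
      (Nat.multinomial univ α * Nat.multinomial univ β : ℂ) *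
        (if α = β then c * ∏ i, ((α i)! : ℂ) else 0) ^ 2 =
      if k = l then (c * k !) ^ 2 else 0 := by
    intro α hα
    have hfac : (Nat.multinomial univ α * ∏ i, ((α i)! : ℂ)) = k ! := by
      exact_mod_cast multinomial_mul_prod_factorial hα
    have hterm (β : ι → ℕ) : (Nat.multinomial univ α * Nat.multinomial univ β : ℂ) *
        (if α = β then c * ∏ i, ((α i)! : ℂ) else 0) ^ 2 = if α = β then (c * k !) ^ 2 else 0 := by
      split_ifs with h
      · subst h; rw [← hfac]; ring
      · ring
    have hmem : α ∈ piAntidiag univ l ↔ k = l := by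
      rw [mem_piAntidiag] at hα ⊢
      simp [hα.1]
    simp only [hterm, sum_ite_eq, hmem]
  rw [sum_congr rfl hdiag]
  split_ifs
  · rw [sum_const, card_piAntidiag_univ, nsmul_eq_mul]
  · exact sum_const_zero

theorem choose_mul_factorial_sq {n : ℕ} (hn : 1 ≤ n) (k : ℕ) :
    ((n + k - 1).choose k : ℂ) * (k ! : ℂ) ^ 2 = k ! * (n + k - 1)! / (n - 1)! := by
  obtain ⟨m, rfl⟩ := Nat.exists_eq_add_of_le' hn
  rw [Nat.add_sub_cancel, show m + 1 + k - 1 = m + k by omega,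
    eq_div_iff (by exact_mod_cast m.factorial_ne_zero), ← Nat.add_choose_mul_factorial_mul_factorial]
  push_cast; ring

section

variable {n : ℕ}

noncomputable def segalBargmannInner (f g : (Fin n → ℂ) × (Fin n → ℂ) → ℂ) : ℂ :=
  (1 / π ^ (2 * n) : ℝ) • ∫ zz, exp (-(∑ i, ‖zz.1 i‖ ^ 2) - ∑ i, ‖zz.2 i‖ ^ 2) •
    (starRingEnd ℂ (f zz) * g zz)

theorem segalBargmannInner_const_mul (c d : ℂ) (f g : (Fin n → ℂ) × (Fin n → ℂ) → ℂ) :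
    segalBargmannInner (fun zz => c * f zz) (fun zz => d * g zz) =
      starRingEnd ℂ c * d * segalBargmannInner f g := by
  simp only [segalBargmannInner, map_mul, ← integral_const_mul, mul_smul_comm]
  congr 2 with zz
  simp only [Complex.real_smul]; ring

theorem gaussWeight_smul_conj_Zval_pow_mul (k l : ℕ) (zz : (Fin n → ℂ) × (Fin n → ℂ)) :
    exp (-(∑ i, ‖zz.1 i‖ ^ 2) - ∑ i, ‖zz.2 i‖ ^ 2) •
      (starRingEnd ℂ ((Zval zz) ^ k) * (Zval zz) ^ l) =
    ∑ α ∈ piAntidiag (univ : Finset (Fin n)) k, ∑ β ∈ piAntidiag univ l,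
      (Nat.multinomial univ α * Nat.multinomial univ β : ℂ) *
        ((∏ i, gaussMonomial (α i) (β i) (zz.1 i)) * ∏ i, gaussMonomial (α i) (β i) (zz.2 i)) := by
  have hweight : exp (-(∑ i, ‖zz.1 i‖ ^ 2) - ∑ i, ‖zz.2 i‖ ^ 2) =
      (∏ i, exp (-‖zz.1 i‖ ^ 2)) * ∏ i, exp (-‖zz.2 i‖ ^ 2) := by
    rw [← exp_sum, ← exp_sum, ← exp_add, sum_neg_distrib, sum_neg_distrib, sub_eq_add_neg]
  rw [hweight, Zval, map_pow, map_sum, sum_pow_eq_sum_piAntidiag, sum_pow_eq_sum_piAntidiag,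
    sum_mul_sum, Complex.real_smul, mul_sum]
  refine sum_congr rfl fun α _ => ?_
  rw [mul_sum]
  refine sum_congr rfl fun β _ => ?_
  simp only [gaussMonomial, map_mul, mul_pow, prod_mul_distrib]
  push_cast
  ring

theorem integral_gaussWeight_smul_conj_Zval_pow_mul (k l : ℕ) :
    ∫ zz : (Fin n → ℂ) × (Fin n → ℂ), exp (-(∑ i, ‖zz.1 i‖ ^ 2) - ∑ i, ‖zz.2 i‖ ^ 2) •
      (starRingEnd ℂ ((Zval zz) ^ k) * (Zval zz) ^ l) =
    ∑ α ∈ piAntidiag (univ : Finset (Fin n)) k, ∑ β ∈ piAntidiag univ l,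
      (Nat.multinomial univ α * Nat.multinomial univ β : ℂ) *
        (if α = β then (π : ℂ) ^ n * ∏ i, ((α i)! : ℂ) else 0) ^ 2 := by
  have hint (α β : Fin n → ℕ) : Integrable (fun zz : (Fin n → ℂ) × (Fin n → ℂ) =>
      (∏ i, gaussMonomial (α i) (β i) (zz.1 i)) * ∏ i, gaussMonomial (α i) (β i) (zz.2 i)) := by
    rw [Measure.volume_eq_prod]
    exact (integrable_prod_gaussMonomial α β).mul_prod (integrable_prod_gaussMonomial α β)
  simp_rw [gaussWeight_smul_conj_Zval_pow_mul]
  rw [integral_finsetSum _ fun α _ => integrable_finsetSum _ fun β _ => (hint α β).const_mul _]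
  refine sum_congr rfl fun α _ => ?_
  rw [integral_finsetSum _ fun β _ => (hint α β).const_mul _]
  refine sum_congr rfl fun β _ => ?_
  rw [integral_const_mul, Measure.volume_eq_prod,
    integral_prod_mul (fun z : Fin n → ℂ => ∏ i, gaussMonomial (α i) (β i) (z i))
      (fun z : Fin n → ℂ => ∏ i, gaussMonomial (α i) (β i) (z i)), integral_prod_gaussMonomial,
    Fintype.card_fin, sq]

theorem segalBargmannInner_Zval_pow (hn : 1 ≤ n) (k l : ℕ) :
    segalBargmannInner (fun zz : (Fin n → ℂ) × (Fin n → ℂ) => Zval zz ^ k) (fun zz => Zval zz ^ l) =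
      if k = l then ((k ! : ℂ) * ((n + k - 1)! : ℂ) / ((n - 1)! : ℂ)) else 0 := by
  rw [segalBargmannInner, integral_gaussWeight_smul_conj_Zval_pow_mul, sum_multinomial_mul_ite_sq,
    Fintype.card_fin]
  split_ifs with hkl
  · have hπ : (π : ℂ) ≠ 0 := by exact_mod_cast pi_ne_zero
    rw [← choose_mul_factorial_sq hn, Complex.real_smul]
    push_cast
    field_simp
    ring
  · exact smul_zero _

end

theorem segal_bargmann_Z_powers (n : ℕ) (hn : 1 ≤ n) (k l : ℕ) :
    ((1 / Real.pi ^ (2 * n) : ℝ) •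
      ∫ zz : (Fin n → ℂ) × (Fin n → ℂ),
        Real.exp (-(∑ i, ‖zz.1 i‖ ^ 2) - ∑ i, ‖zz.2 i‖ ^ 2) •
          (starRingEnd ℂ ((Zval zz) ^ k) * (Zval zz) ^ l)) =
      (if k = l then ((k ! : ℂ) * ((n + k - 1)! : ℂ) / ((n - 1)! : ℂ)) else 0) ∧
    ((1 / Real.pi ^ (2 * n) : ℝ) •
      ∫ zz : (Fin n → ℂ) × (Fin n → ℂ),
        Real.exp (-(∑ i, ‖zz.1 i‖ ^ 2) - ∑ i, ‖zz.2 i‖ ^ 2) •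
          (starRingEnd ℂ (psiVal n k zz) * psiVal n l zz)) =
      (if k = l then (1 : ℂ) else 0) := by
  refine ⟨segalBargmannInner_Zval_pow hn k l, ?_⟩
  change segalBargmannInner (fun zz => _ * Zval zz ^ k) (fun zz => _ * Zval zz ^ l) = _
  rw [segalBargmannInner_const_mul, segalBargmannInner_Zval_pow hn, Complex.conj_ofReal]
  split_ifs with hkl
  · subst hkl
    rw [← Complex.ofReal_mul, Real.mul_self_sqrt (by positivity)]
    push_cast
    field_simp [Nat.factorial_ne_zero]
  · exact mul_zero _
end
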